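/- arXiv:1309.0896 — 6 statements merged into one kernel-verified Lean document; each statement's English description precedes it below -/
import Mathlib

section
/- Let a ∈ [0,1] and q ∈ (0,1). The least fixed point over [0,1] of the monotone map x ↦ min(1, x + max(0, a + (1 − q) − 1)) equals 1 if a > q, and equals 0 otherwise. (This is the semantics of the threshold formula P_{>q} φ = μX.(X ⊕ (φ ⊙ (1−q))) at a state where φ has value a.) -/
open unitInterval

instance : Fact ((0:ℝ) ≤ 1) := ⟨zero_le_one⟩

/-! Write `c = max 0 (a - q)` for the constant Łukasiewicz summand. If `c > 0`, a fixed point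
`x = min 1 (x + c)` can only be `1`, since `x = x + c` is impossible. If `c = 0`, the map fixes
`0 = ⊥`, which is then the least fixed point. -/

theorem eq_one_of_eq_min_one_add {x c : ℝ} (hc : 0 < c) (h : x = min 1 (x + c)) : x = 1 := by
  rcases min_choice 1 (x + c) with h1 | h1 <;> rw [h1] at h <;> linarith

theorem lfp_eq_one_of_forall_coe_eq_min_one_add (f : I →o I) {c : ℝ} (hc : 0 < c)
    (hf : ∀ x : I, (f x : ℝ) = min 1 (x + c)) : f.lfp = 1 := by
  have hfix : ((f.lfp : I) : ℝ) = min 1 (f.lfp + c) := by rw [← hf, f.map_lfp]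
  exact Subtype.ext (eq_one_of_eq_min_one_add hc hfix)

theorem lfp_eq_zero_of_map_zero (f : I →o I) (h : f 0 = 0) : f.lfp = 0 :=
  le_antisymm (f.lfp_le_fixed h) bot_le

theorem lukasiewicz_mul_one_sub_eq (a q : ℝ) : max 0 (a + (1 - q) - 1) = max 0 (a - q) := by
  ring_nf

theorem stmt2_general (a q : ℝ)
    (f : I →o I)
    (hf : ∀ x : I, ((f x : I) : ℝ) = min 1 ((x : ℝ) + max 0 (a + (1 - q) - 1))) :
    (q < a → OrderHom.lfp f = 1) ∧ (¬ q < a → OrderHom.lfp f = 0) := by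
  simp only [lukasiewicz_mul_one_sub_eq] at hf
  refine ⟨fun hlt => ?_, fun hle => ?_⟩
  · exact lfp_eq_one_of_forall_coe_eq_min_one_add f (lt_max_of_lt_right (sub_pos.2 hlt)) hf
  · have hzero : max 0 (a - q) = 0 := max_eq_left (by linarith [not_lt.1 hle])
    refine lfp_eq_zero_of_map_zero f (Subtype.ext ?_)
    simp [hf, hzero]

/-- Let `a ∈ [0,1]` and `q ∈ (0,1)`. The least fixed point over `[0,1]` of the
monotone map `x ↦ min 1 (x + max 0 (a + (1 - q) - 1))` equals `1` if `a > q`,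
and equals `0` otherwise.  (Semantics of the threshold formula
`P_{>q} φ = μX.(X ⊕ (φ ⊙ (1-q)))` at a state where `φ` has value `a`.) -/
theorem stmt2 (a q : ℝ) (ha : a ∈ Set.Icc (0:ℝ) 1) (hq : q ∈ Set.Ioo (0:ℝ) 1)
    (f : I →o I)
    (hf : ∀ x : I, ((f x : I) : ℝ) = min 1 ((x : ℝ) + max 0 (a + (1 - q) - 1))) :
    (q < a → OrderHom.lfp f = 1) ∧ (¬ q < a → OrderHom.lfp f = 0) :=
  stmt2_general a q f hf
end

section
/- Let a ∈ [0,1] and q ∈ (0,1). The greatest fixed point over [0,1] of the monotone map x ↦ max(0, x + min(1, a + (1 − q)) − 1) equals 1 if a ≥ q, and equals 0 otherwise. (This is the semantics of the threshold formula P_{≥q} φ = νX.(X ⊙ (φ ⊕ (1−q))) at a state where φ has value a.) -/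
/-!
With `c = min 1 (a + (1 - q))` the map is `x ↦ x ⊙ c`. If `q ≤ a` then `c = 1` and `1` is a
post-fixed point, hence the greatest fixed point. If `a < q` then `c < 1`, so `x ⊙ c < x`
for every `x > 0`, and `0` is the only fixed point.
-/

open unitInterval

lemma eq_zero_of_eq_max_zero_add_sub_one {x c : ℝ} (hc : c < 1) (h : x = max 0 (x + c - 1)) :
    x = 0 := by
  rcases max_choice 0 (x + c - 1) with hmax | hmax <;> rw [hmax] at h
  · exact h
  · linarith

section LukasiewiczStep

variable {c : ℝ} {g : I →o I}

lemma gfp_eq_one_of_one_le (hg : ∀ x : I, (g x : ℝ) = max 0 ((x : ℝ) + c - 1)) 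
    (hc : 1 ≤ c) : g.gfp = 1 := by
  have h_one_le : (1 : I) ≤ g 1 := by
    change (1 : ℝ) ≤ g 1
    rw [hg 1, Set.Icc.coe_one]
    exact le_max_of_le_right (by linarith)
  exact top_unique (g.le_gfp h_one_le)

lemma gfp_eq_zero_of_lt_one (hg : ∀ x : I, (g x : ℝ) = max 0 ((x : ℝ) + c - 1))
    (hc : c < 1) : g.gfp = 0 := by
  have h_fixed : (g.gfp : ℝ) = max 0 ((g.gfp : ℝ) + c - 1) := by rw [← hg, g.map_gfp]
  exact Subtype.ext (eq_zero_of_eq_max_zero_add_sub_one hc h_fixed)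

end LukasiewiczStep

theorem stmt3_general (a q : ℝ)
    (g : I →o I)
    (hg : ∀ x : I, ((g x : I) : ℝ) = max 0 ((x : ℝ) + min 1 (a + (1 - q)) - 1)) :
    (q ≤ a → OrderHom.gfp g = 1) ∧ (¬ q ≤ a → OrderHom.gfp g = 0) := by
  refine ⟨fun hqa => gfp_eq_one_of_one_le hg (le_min le_rfl (by linarith)), fun hqa => ?_⟩
  exact gfp_eq_zero_of_lt_one hg ((min_le_right _ _).trans_lt (by linarith))

/-- Let `a ∈ [0,1]` and `q ∈ (0,1)`. The greatest fixed point over `[0,1]` of the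
monotone map `x ↦ max 0 (x + min 1 (a + (1 - q)) - 1)` equals `1` if `a ≥ q`,
and equals `0` otherwise.  (Semantics of the threshold formula
`P_{≥q} φ = νX.(X ⊙ (φ ⊕ (1-q)))` at a state where `φ` has value `a`.) -/
theorem stmt3 (a q : ℝ) (ha : a ∈ Set.Icc (0:ℝ) 1) (hq : q ∈ Set.Ioo (0:ℝ) 1)
    (g : I →o I)
    (hg : ∀ x : I, ((g x : I) : ℝ) = max 0 ((x : ℝ) + min 1 (a + (1 - q)) - 1)) :
    (q ≤ a → OrderHom.gfp g = 1) ∧ (¬ q ≤ a → OrderHom.gfp g = 0) :=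
  stmt3_general a q g hg
end

section
/- Let S be a set, let D be a set of discrete probability distributions on S, let g : S → [0,1], and let b = inf_{d ∈ D} ∑ₜ d(t)·g(t), computed in the complete lattice [0,1] (so b = 1 when D is empty). Then the greatest fixed point over [0,1] of the monotone map x ↦ max(0, x + b − 1) equals 1 if g(t) = 1 for all d ∈ D and all t ∈ S with d(t) > 0, and equals 0 otherwise. (This is the semantics of the Łukasiewicz μ-calculus formula P_{=1}(□X) = νZ.(Z ⊙ □X) at a state whose set of outgoing distributions is D, under an interpretation assigning g to X.) -/
/-! Since `g ≤ 1` and each `d ∈ D` has total mass one, `∑ₜ d(t) g(t) = 1` exactly when `g = 1`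
on the support of `d`; hence `b = 1` in the first case and `b < 1` in the second. The map
`x ↦ x ⊙ b` then fixes `1` if `b = 1`, while for `b < 1` it sends every `x > 0` strictly below
`x`, so its only fixed point is `0`. -/

open unitInterval

namespace PMF

variable {S : Type*}

theorem tsum_toReal (d : PMF S) : ∑' t, (d t).toReal = 1 := by
  rw [← ENNReal.tsum_toReal_eq d.apply_ne_top, d.tsum_coe, ENNReal.toReal_one]

theorem summable_toReal (d : PMF S) : Summable fun t => (d t).toReal :=
  ENNReal.summable_toReal (d.tsum_coe ▸ ENNReal.one_ne_top)

theorem tsum_toReal_mul_eq_one (d : PMF S) {g : S → ℝ} (h : ∀ t, 0 < d t → g t = 1) :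
    ∑' t, (d t).toReal * g t = 1 := by
  calc ∑' t, (d t).toReal * g t = ∑' t, (d t).toReal := tsum_congr fun t => by
        rcases eq_zero_or_pos (d t) with h0 | hpos
        · simp [h0]
        · rw [h t hpos, mul_one]
    _ = 1 := d.tsum_toReal

theorem tsum_toReal_mul_lt_one (d : PMF S) {g : S → ℝ} (hg : ∀ t, g t ∈ Set.Icc (0:ℝ) 1)
    {t₀ : S} (ht₀ : 0 < d t₀) (hgt₀ : g t₀ < 1) : ∑' t, (d t).toReal * g t < 1 := by
  have hle : ∀ t, (d t).toReal * g t ≤ (d t).toReal := fun t =>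
    mul_le_of_le_one_right ENNReal.toReal_nonneg (hg t).2
  have hlt : (d t₀).toReal * g t₀ < (d t₀).toReal :=
    mul_lt_of_lt_one_right (ENNReal.toReal_pos ht₀.ne' (d.apply_ne_top t₀)) hgt₀
  have hsum : Summable fun t => (d t).toReal * g t :=
    d.summable_toReal.of_nonneg_of_le (fun t => mul_nonneg ENNReal.toReal_nonneg (hg t).1) hle
  exact d.tsum_toReal ▸ hsum.tsum_lt_tsum hle hlt d.summable_toReal

end PMF

theorem eq_zero_of_eq_max_zero_add_sub_one_s8 {x b : ℝ} (hb : b < 1) (hx : x = max 0 (x + b - 1)) :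
    x = 0 := by
  rcases max_cases 0 (x + b - 1) with ⟨h, -⟩ | ⟨h, -⟩ <;> linarith

/-- Let `D` be a set of discrete probability distributions on `S`, `g : S → [0,1]`,
and let `b = inf_{d ∈ D} ∑ₜ d(t)·g(t)`, computed in the complete lattice `[0,1]`
(so `b = 1` when `D` is empty).  The greatest fixed point over `[0,1]` of the
monotone map `x ↦ max 0 (x + b - 1)` equals `1` if `g(t) = 1` for all `d ∈ D`
and all `t` with `d(t) > 0`, and equals `0` otherwise.
(Semantics of `P_{=1}(□X) = νZ.(Z ⊙ □X)`.) -/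
theorem stmt8 {S : Type*} (D : Set (PMF S)) (g : S → ℝ)
    (hg : ∀ t, g t ∈ Set.Icc (0:ℝ) 1)
    (b : I) (hb : b = sInf {x : I | ∃ d ∈ D, (x : ℝ) = ∑' t, (d t).toReal * g t})
    (f : I →o I) (hf : ∀ x : I, ((f x : I) : ℝ) = max 0 ((x : ℝ) + (b : ℝ) - 1)) :
    ((∀ d ∈ D, ∀ t, 0 < d t → g t = 1) → OrderHom.gfp f = 1) ∧
      (¬ (∀ d ∈ D, ∀ t, 0 < d t → g t = 1) → OrderHom.gfp f = 0) := by
  constructor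
  · intro h
    have hb1 : b = 1 := hb ▸ le_antisymm le_one' (le_sInf fun x ⟨d, hd, hx⟩ =>
      (Subtype.ext (hx.trans (d.tsum_toReal_mul_eq_one (h d hd)))).ge)
    have hf1 : f 1 = 1 := Subtype.ext (by simp [hf, hb1])
    exact le_antisymm le_one' (f.le_gfp hf1.ge)
  · intro h
    push Not at h
    obtain ⟨d, hd, t₀, ht₀, hgt₀⟩ := h
    have hlt := d.tsum_toReal_mul_lt_one hg ht₀ ((hg t₀).2.lt_of_ne hgt₀)
    have hb_lt : (b : ℝ) < 1 := by
      have hnonneg : 0 ≤ ∑' t, (d t).toReal * g t :=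
        tsum_nonneg fun t => mul_nonneg ENNReal.toReal_nonneg (hg t).1
      have hb_le : b ≤ ⟨_, hnonneg, hlt.le⟩ := hb ▸ sInf_le ⟨d, hd, rfl⟩
      exact (Subtype.coe_le_coe.mpr hb_le).trans_lt hlt
    have hfix : ((OrderHom.gfp f : I) : ℝ) = max 0 ((OrderHom.gfp f : I) + (b : ℝ) - 1) := by
      rw [← hf, f.map_gfp]
    exact Subtype.ext (eq_zero_of_eq_max_zero_add_sub_one_s8 hb_lt hfix)
end

section
/- Let S be a type, R : S → S → Prop a binary relation, and A, B ⊆ S. Consider the monotone operator F on the complete lattice of functions S → [0,1] (ordered pointwise) defined by F(f)(s) = max(χ_B(s), min(χ_A(s), h_f(s))), where h_f(s) = 1 if there exists t with R s t and f(t) > 0, and h_f(s) = 0 otherwise, and where χ_A, χ_B denote {0,1}-valued indicator functions. Then the least fixed point of F is the indicator function of the set of states s from which B is reachable through A, i.e. the set of s such that there exist n ≥ 0 and states s = s₀, s₁, …, sₙ with R sᵢ sᵢ₊₁ for all i < n, sₙ ∈ B, and sᵢ ∈ A for all i < n. (This is the correctness of the encoding E(∃(φ₁ U φ₂)) = μX.(E(φ₂)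 ⊔ (E(φ₁) ⊓ P_{>0}◇X)) in the case where φ₁, φ₂ denote the {0,1}-valued indicators of A and B.) -/
open unitInterval

/-!
The reachability set `Reach` is the least set `X` with `B ∪ (A ∩ R⁻¹X) ⊆ X`: it is closed under
this step (prepend an edge to a path), and every closed set contains it (induction on the path
length). The operator `F` maps any `f` to the indicator of `B ∪ (A ∩ R⁻¹{f > 0})`, so it sends the
indicator of `Reach` to an indicator below it, while its least fixed point `f` is the indicator of
a set `X = {f > 0}` with `B ∪ (A ∩ R⁻¹X) = X`, hence above the indicator of `Reach`.
-/

namespace ExistsUntil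

variable {S : Type*} (R : S → S → Prop) (A B : Set S)

def step (X : Set S) : Set S := B ∪ (A ∩ {s | ∃ t, R s t ∧ t ∈ X})

def reachable : Set S :=
  {s | ∃ (n : ℕ) (p : ℕ → S), p 0 = s ∧ (∀ i < n, R (p i) (p (i + 1))) ∧
    p n ∈ B ∧ ∀ i < n, p i ∈ A}

theorem step_reachable_subset : step R A B (reachable R A B) ⊆ reachable R A B := by
  rintro s (hB | ⟨hA, t, hst, n, p, rfl, hR, hpB, hpA⟩)
  · exact ⟨0, fun _ => s, rfl, nofun, hB, nofun⟩
  · refine ⟨n + 1, fun | 0 => s | i + 1 => p i, rfl, ?_, hpB, ?_⟩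
    · rintro (_ | i) hi
      exacts [hst, hR i (by omega)]
    · rintro (_ | i) hi
      exacts [hA, hpA i (by omega)]

theorem reachable_subset_of_step_subset {X : Set S} (hX : step R A B X ⊆ X) :
    reachable R A B ⊆ X := by
  rintro _ ⟨n, p, rfl, hR, hB, hA⟩
  induction n generalizing p with
  | zero => exact hX (Or.inl hB)
  | succ n ih =>
    have hp1 : p 1 ∈ X := ih (p ∘ Nat.succ) (fun i hi => hR (i + 1) (by omega)) hB
      (fun i hi => hA (i + 1) (by omega))
    exact hX (Or.inr ⟨hA 0 n.succ_pos, p 1, hR 0 n.succ_pos, hp1⟩)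

theorem setOf_indicator_one_pos (X : Set S) :
    {s | 0 < X.indicator (fun _ => (1 : I)) s} = X := by
  ext s
  by_cases hs : s ∈ X <;> simp [hs]

theorem max_indicator_min_indicator (f : S → I) (s : S) :
    max (B.indicator (fun _ => (1 : I)) s)
        (min (A.indicator (fun _ => (1 : I)) s)
          ({s' : S | ∃ t, R s' t ∧ 0 < f t}.indicator (fun _ => (1 : I)) s)) =
      (step R A B {t | 0 < f t}).indicator (fun _ => 1) s := by
  by_cases hB : s ∈ B <;> by_cases hA : s ∈ A <;> by_cases hR : ∃ t, R s t ∧ 0 < f t <;>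
    simp [step, *]

end ExistsUntil

open ExistsUntil in
/-- Correctness of the encoding `E(∃(φ₁ U φ₂)) = μX.(E(φ₂) ⊔ (E(φ₁) ⊓ P_{>0}◇X))`
for `{0,1}`-valued `φ₁, φ₂` denoting sets `A, B`: the least fixed point of the
operator `F(f)(s) = max(χ_B s, min(χ_A s, h_f s))`, where `h_f` is the indicator
of `{s | ∃ t, R s t ∧ f t > 0}`, is the indicator of the set of states from which
`B` is reachable through `A`. -/
theorem stmt9 {S : Type*} (R : S → S → Prop) (A B : Set S)
    (F : (S → I) →o (S → I))
    (hF : ∀ (f : S → I) (s : S),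
      F f s = max (B.indicator (fun _ => (1 : I)) s)
        (min (A.indicator (fun _ => (1 : I)) s)
          ({s' : S | ∃ t, R s' t ∧ 0 < f t}.indicator (fun _ => (1 : I)) s))) :
    OrderHom.lfp F =
      ({s : S | ∃ (n : ℕ) (p : ℕ → S), p 0 = s ∧ (∀ i < n, R (p i) (p (i + 1))) ∧
          p n ∈ B ∧ ∀ i < n, p i ∈ A}).indicator (fun _ => (1 : I)) := by
  have hF_step (f : S → I) : F f = (step R A B {t | 0 < f t}).indicator (fun _ => 1) :=
    funext fun s => (hF f s).trans (max_indicator_min_indicator R A B f s)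
  change OrderHom.lfp F = (reachable R A B).indicator _
  refine le_antisymm (OrderHom.lfp_le F ?_) ?_
  · rw [hF_step, setOf_indicator_one_pos]
    exact Set.indicator_le_indicator_of_subset (step_reachable_subset R A B) fun _ => zero_le
  · set f := OrderHom.lfp F
    have hf : f = (step R A B {t | 0 < f t}).indicator (fun _ => 1) :=
      (OrderHom.map_lfp F).symm.trans (hF_step f)
    have hX : {t | 0 < f t} = step R A B {t | 0 < f t} := by
      conv_lhs => rw [hf, setOf_indicator_one_pos]
    rw [hf]
    exact Set.indicator_le_indicator_of_subset
      ((reachable_subset_of_step_subset R A B hX.ge).trans hX.le) fun _ => zero_le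
end

section
/- For every Łukasiewicz μ-term t(x₁, …, xₙ) and every vector (q₁, …, qₙ) of rational numbers in [0,1], the value t(q₁, …, qₙ) ∈ [0,1] is a rational number. -/
/-!
After clamping its arguments to `[0,1]`, every term denotes a function on `ℝⁿ` whose graph is
semilinear: a finite union of finite intersections of rational half-spaces. Semilinear sets are
closed under Boolean operations, under reindexing coordinates, and under projection, by
Fourier–Motzkin elimination: by Helly's theorem on the line a conjunction of constraints on the
last coordinate is satisfiable iff every pair of them is, and a pair is eliminated by one rational
combination. The connectives have semilinear graphs, and `μx.t` (resp. `νx.t`) at `v` is the least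
(resp. greatest) `y ∈ [0,1]` with `t(v, y) ≤ y` (resp. `y ≤ t(v, y)`), a condition first-order
definable from the graph of `t`. Finally, if the fibre of a semilinear set over a rational point
is a single `y`, one of the defining constraints is tight at `y`, so `y` is rational.
-/

open unitInterval

noncomputable section

/-- Łukasiewicz strong disjunction on `[0,1]`: `x ⊕ y = min 1 (x + y)`. -/
def lukAdd (x y : I) : I :=
  ⟨min 1 ((x : ℝ) + (y : ℝ)),
    le_min zero_le_one (add_nonneg x.2.1 y.2.1), min_le_left _ _⟩

/-- Łukasiewicz strong conjunction on `[0,1]`: `x ⊙ y = max 0 (x + y − 1)`. -/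
def lukMul (x y : I) : I :=
  ⟨max 0 ((x : ℝ) + (y : ℝ) - 1), le_max_left _ _,
    max_le zero_le_one (by have := x.2.2; have := y.2.2; linarith)⟩

/-- Scalar multiplication `q x` by a rational `q ∈ [0,1]`. -/
def lukScal (q : {q : ℚ // 0 ≤ q ∧ q ≤ 1}) (x : I) : I :=
  ⟨(q.1 : ℝ) * (x : ℝ), mul_nonneg (by exact_mod_cast q.2.1) x.2.1, by
    have h1 : (q.1 : ℝ) ≤ 1 := by exact_mod_cast q.2.2
    have h0 : (0 : ℝ) ≤ (q.1 : ℝ) := by exact_mod_cast q.2.1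
    have := x.2.2; have := x.2.1
    nlinarith⟩

/-- Łukasiewicz μ-terms with (at most) `n` free variables, in de Bruijn style:
`t ::= x | q t | t ⊔ t | t ⊓ t | t ⊕ t | t ⊙ t | μx.t | νx.t`, with `q`
ranging over rationals in `[0,1]`. -/
inductive LTerm : ℕ → Type
  | var {n} : Fin n → LTerm n
  | scal {n} : {q : ℚ // 0 ≤ q ∧ q ≤ 1} → LTerm n → LTerm n
  | join {n} : LTerm n → LTerm n → LTerm n
  | meet {n} : LTerm n → LTerm n → LTerm n
  | oplus {n} : LTerm n → LTerm n → LTerm n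
  | odot {n} : LTerm n → LTerm n → LTerm n
  | mu {n} : LTerm (n + 1) → LTerm n
  | nu {n} : LTerm (n + 1) → LTerm n

/-- The value `t(r⃗) ∈ [0,1]` of a μ-term at `r⃗ ∈ [0,1]ⁿ`; `μ` and `ν` denote
the least and greatest fixed points in the complete lattice `[0,1]`, given by
the Knaster–Tarski theorem as `sInf {x | t(r⃗,x) ≤ x}` and
`sSup {x | x ≤ t(r⃗,x)}` respectively. -/
def LTerm.eval : ∀ {n}, LTerm n → (Fin n → I) → I
  | _, .var i, ρ => ρ i
  | _, .scal q t, ρ => lukScal q (t.eval ρ)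
  | _, .join t₁ t₂, ρ => max (t₁.eval ρ) (t₂.eval ρ)
  | _, .meet t₁ t₂, ρ => min (t₁.eval ρ) (t₂.eval ρ)
  | _, .oplus t₁ t₂, ρ => lukAdd (t₁.eval ρ) (t₂.eval ρ)
  | _, .odot t₁ t₂, ρ => lukMul (t₁.eval ρ) (t₂.eval ρ)
  | _, .mu t, ρ => sInf {x : I | t.eval (Fin.snoc ρ x) ≤ x}
  | _, .nu t, ρ => sSup {x : I | x ≤ t.eval (Fin.snoc ρ x)}

open Filter Topology

def PosCond (strict : Bool) (y : ℝ) : Prop := if strict then 0 < y else 0 ≤ y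

namespace PosCond

variable {s t : Bool} {y z : ℝ}

theorem of_pos (s : Bool) (hy : 0 < y) : PosCond s y := by
  cases s
  exacts [hy.le, hy]

theorem nonneg (h : PosCond s y) : 0 ≤ y := by
  cases s
  exacts [h, le_of_lt h]

theorem not_iff : ¬ PosCond s y ↔ PosCond (!s) (-y) := by
  cases s <;> simp [PosCond]

theorem of_or_left (h : PosCond (s || t) y) : PosCond s y := by
  cases s <;> cases t <;> simp_all [PosCond, le_of_lt]

theorem div (h : PosCond s y) {c : ℝ} (hc : 0 < c) : PosCond s (y / c) := by
  cases s
  exacts [div_nonneg h hc.le, div_pos h hc]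

theorem add_mul (hy : PosCond s y) (hz : PosCond t z) {p q : ℝ} (hp : 0 < p) (hq : 0 < q) :
    PosCond (s || t) (p * y + q * z) := by
  cases s <;> cases t <;> simp only [PosCond, Bool.or_false, Bool.or_true, if_true]
    at hy hz ⊢
  · exact add_nonneg (mul_nonneg hp.le hy) (mul_nonneg hq.le hz)
  · exact add_pos_of_nonneg_of_pos (mul_nonneg hp.le hy) (mul_pos hq hz)
  · exact add_pos_of_pos_of_nonneg (mul_pos hp hy) (mul_nonneg hq.le hz)
  · exact add_pos (mul_pos hp hy) (mul_pos hq hz)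

end PosCond

theorem convex_setOf_posCond (s : Bool) (α a : ℝ) :
    Convex ℝ {x : ℝ | PosCond s (α + a * x)} := by
  intro x hx y hy p q hp hq hpq
  have hcomb : α + a * (p • x + q • y) = p * (α + a * x) + q * (α + a * y) := by
    simp only [smul_eq_mul]
    linear_combination α * hpq.symm
  simp only [Set.mem_ofPred_eq, hcomb] at hx hy ⊢
  cases s
  · exact add_nonneg (mul_nonneg hp hx) (mul_nonneg hq hy)
  · simp only [PosCond, if_true] at hx hy ⊢
    nlinarith [mul_le_mul_of_nonneg_left (min_le_left (α + a * x) (α + a * y)) hp,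
      mul_le_mul_of_nonneg_left (min_le_right (α + a * x) (α + a * y)) hq, lt_min hx hy]

theorem exists_pos_and_pos_of_mul_pos {a b : ℝ} (hab : 0 < a * b) (α β : ℝ) :
    ∃ x, 0 < α + a * x ∧ 0 < β + b * x := by
  wlog ha : 0 < a generalizing a b
  · have ha' : 0 < -a := neg_pos.2 <| (not_lt.1 ha).lt_of_ne <| by rintro rfl; simp at hab
    obtain ⟨x, hx⟩ := this (a := -a) (b := -b) (by rwa [neg_mul_neg]) ha'
    exact ⟨-x, by simpa using hx⟩
  have hb : 0 < b := (pos_iff_pos_of_mul_pos hab).1 ha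
  refine ⟨(|α| + 1) / a + (|β| + 1) / b, ?_, ?_⟩
  · have : 0 < a * ((|β| + 1) / b) := by positivity
    rw [mul_add, mul_div_cancel₀ _ ha.ne']
    linarith [neg_abs_le α]
  · have : 0 < b * ((|α| + 1) / a) := by positivity
    rw [mul_add, mul_div_cancel₀ _ hb.ne']
    linarith [neg_abs_le β]

theorem exists_posCond_and_posCond_of_mul_neg {a b : ℝ} (hab : a * b < 0) {s t : Bool}
    {α β : ℝ} (h : PosCond (s || t) (|b| * α + |a| * β)) :
    ∃ x, PosCond s (α + a * x) ∧ PosCond t (β + b * x) := by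
  wlog ha : 0 < a generalizing a b α β s t
  · rw [Bool.or_comm, add_comm] at h
    obtain ⟨x, hx⟩ := this (by rwa [mul_comm]) h (by nlinarith)
    exact ⟨x, hx.symm⟩
  have hb : b < 0 := by nlinarith
  -- at the midpoint of the bounds `-α / a` and `-β / b` on `x`, both constraints are positive
  -- multiples of the combination in `h`
  refine ⟨-(α / a + β / b) / 2, ?_, ?_⟩
  · have : α + a * (-(α / a + β / b) / 2) = (|b| * α + |a| * β) / (2 * |b|) := by
      rw [abs_of_pos ha, abs_of_neg hb]
      field_simp [hb.ne]
      ring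
    exact this ▸ h.of_or_left.div (mul_pos two_pos (abs_pos.2 hb.ne))
  · have : β + b * (-(α / a + β / b) / 2) = (|b| * α + |a| * β) / (2 * |a|) := by
      rw [abs_of_pos ha, abs_of_neg hb]
      field_simp [hb.ne]
      ring
    rw [Bool.or_comm] at h
    exact this ▸ h.of_or_left.div (mul_pos two_pos (abs_pos.2 ha.ne'))

theorem exists_posCond_and_posCond_iff {a b : ℝ} (ha : a ≠ 0) (hb : b ≠ 0) (s t : Bool)
    (α β : ℝ) :
    (∃ x, PosCond s (α + a * x) ∧ PosCond t (β + b * x)) ↔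
      (a * b < 0 → PosCond (s || t) (|b| * α + |a| * β)) := by
  refine ⟨fun ⟨x, hx, hx'⟩ hab => ?_, fun h => ?_⟩
  · have hcancel : |b| * a + |a| * b = 0 := by
      rcases ha.lt_or_gt with ha | ha
      · rw [abs_of_neg ha, abs_of_pos (by nlinarith)]; ring
      · rw [abs_of_pos ha, abs_of_neg (by nlinarith)]; ring
    have := hx.add_mul hx' (abs_pos.2 hb) (abs_pos.2 ha)
    rwa [show |b| * (α + a * x) + |a| * (β + b * x) = |b| * α + |a| * β by
      linear_combination x * hcancel] at this
  rcases (mul_ne_zero ha hb).lt_or_gt with hab | hab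
  · exact exists_posCond_and_posCond_of_mul_neg hab (h hab)
  · obtain ⟨x, hx, hx'⟩ := exists_pos_and_pos_of_mul_pos hab α β
    exact ⟨x, .of_pos s hx, .of_pos t hx'⟩

structure LinAtom (n : ℕ) where
  coeff : Fin n → ℚ
  const : ℚ
  strict : Bool

namespace LinAtom

variable {n m : ℕ}

def eval (A : LinAtom n) (v : Fin n → ℝ) : ℝ := ∑ i, (A.coeff i : ℝ) * v i + A.const

def Holds (A : LinAtom n) (v : Fin n → ℝ) : Prop := PosCond A.strict (A.eval v)

def neg (A : LinAtom n) : LinAtom n := ⟨-A.coeff, -A.const, !A.strict⟩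

theorem holds_neg (A : LinAtom n) (v : Fin n → ℝ) : A.neg.Holds v ↔ ¬ A.Holds v := by
  have : A.neg.eval v = -A.eval v := by
    simp only [eval, neg, Pi.neg_apply, Rat.cast_neg, neg_mul, Finset.sum_neg_distrib,
      neg_add_rev]
    ring
  rw [Holds, Holds, PosCond.not_iff, this]
  rfl

def comap (e : Fin n → Fin m) (A : LinAtom n) : LinAtom m :=
  ⟨fun j => ∑ i, if e i = j then A.coeff i else 0, A.const, A.strict⟩

theorem eval_comap (e : Fin n → Fin m) (A : LinAtom n) (v : Fin m → ℝ) :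
    (A.comap e).eval v = A.eval (v ∘ e) := by
  simp only [eval, comap, Function.comp_apply, Rat.cast_sum, Finset.sum_mul]
  rw [Finset.sum_comm]
  simp [apply_ite (Rat.cast : ℚ → ℝ)]

theorem holds_comap (e : Fin n → Fin m) (A : LinAtom n) (v : Fin m → ℝ) :
    (A.comap e).Holds v ↔ A.Holds (v ∘ e) := by
  rw [Holds, Holds, eval_comap]
  rfl

def init (A : LinAtom (n + 1)) : LinAtom n := ⟨Fin.init A.coeff, A.const, A.strict⟩

theorem eval_snoc (A : LinAtom (n + 1)) (v : Fin n → ℝ) (x : ℝ) :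
    A.eval (Fin.snoc v x) = A.init.eval v + A.coeff (Fin.last n) * x := by
  simp only [eval, init, Fin.sum_univ_castSucc, Fin.snoc_castSucc, Fin.snoc_last, Fin.init]
  ring

theorem holds_snoc_iff (A : LinAtom (n + 1)) (v : Fin n → ℝ) (x : ℝ) :
    A.Holds (Fin.snoc v x) ↔ PosCond A.strict (A.init.eval v + A.coeff (Fin.last n) * x) := by
  rw [Holds, eval_snoc]

def combine (p q : ℚ) (A B : LinAtom n) : LinAtom n :=
  ⟨p • A.coeff + q • B.coeff, p * A.const + q * B.const, A.strict || B.strict⟩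

theorem eval_combine (p q : ℚ) (A B : LinAtom n) (v : Fin n → ℝ) :
    (combine p q A B).eval v = p * A.eval v + q * B.eval v := by
  simp only [eval, combine, Pi.add_apply, Pi.smul_apply, smul_eq_mul, Rat.cast_add,
    Rat.cast_mul, add_mul, Finset.sum_add_distrib, mul_assoc, ← Finset.mul_sum]
  ring

theorem eval_ratCast (A : LinAtom n) (r : Fin n → ℚ) :
    A.eval (fun i => (r i : ℝ)) = ((∑ i, A.coeff i * r i + A.const : ℚ) : ℝ) := by
  simp [eval]

end LinAtom

def IsSemilinear {n : ℕ} (s : Set (Fin n → ℝ)) : Prop :=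
  ∃ φ : List (List (LinAtom n)), s = ⋃ C ∈ φ, ⋂ A ∈ C, {v | A.Holds v}

section IsSemilinear

variable {n m : ℕ} {s t : Set (Fin n → ℝ)}

theorem isSemilinear_setOf_holds (A : LinAtom n) : IsSemilinear {v | A.Holds v} :=
  ⟨[[A]], by simp⟩

theorem isSemilinear_empty : IsSemilinear (∅ : Set (Fin n → ℝ)) := ⟨[], by simp⟩

theorem isSemilinear_univ : IsSemilinear (Set.univ : Set (Fin n → ℝ)) := ⟨[[]], by simp⟩

theorem IsSemilinear.union (hs : IsSemilinear s) (ht : IsSemilinear t) :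
    IsSemilinear (s ∪ t) := by
  obtain ⟨φ, rfl⟩ := hs
  obtain ⟨ψ, rfl⟩ := ht
  exact ⟨φ ++ ψ, by ext v; simp [or_and_right, exists_or]⟩

theorem IsSemilinear.inter (hs : IsSemilinear s) (ht : IsSemilinear t) :
    IsSemilinear (s ∩ t) := by
  obtain ⟨φ, rfl⟩ := hs
  obtain ⟨ψ, rfl⟩ := ht
  refine ⟨φ.flatMap fun C => ψ.map (C ++ ·), ?_⟩
  ext v
  simp only [Set.mem_inter_iff, Set.mem_iUnion, Set.mem_iInter, Set.mem_ofPred_eq,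
    List.mem_flatMap, List.mem_map, exists_prop]
  constructor
  · rintro ⟨⟨C, hC, hv⟩, ⟨D, hD, hv'⟩⟩
    exact ⟨C ++ D, ⟨C, hC, D, hD, rfl⟩, fun A hA => (List.mem_append.1 hA).elim (hv A) (hv' A)⟩
  · rintro ⟨_, ⟨C, hC, D, hD, rfl⟩, hv⟩
    exact ⟨⟨C, hC, fun A hA => hv A (List.mem_append_left D hA)⟩,
      ⟨D, hD, fun A hA => hv A (List.mem_append_right C hA)⟩⟩

theorem IsSemilinear.biUnion {ι : Type*} (l : List ι) {f : ι → Set (Fin n → ℝ)}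
    (hf : ∀ i ∈ l, IsSemilinear (f i)) : IsSemilinear (⋃ i ∈ l, f i) := by
  induction l with
  | nil => simpa using isSemilinear_empty
  | cons i l ih =>
    simpa using (hf i (by simp)).union (ih fun j hj => hf j (by simp [hj]))

theorem IsSemilinear.biInter {ι : Type*} (l : List ι) {f : ι → Set (Fin n → ℝ)}
    (hf : ∀ i ∈ l, IsSemilinear (f i)) : IsSemilinear (⋂ i ∈ l, f i) := by
  induction l with
  | nil => simpa using isSemilinear_univ
  | cons i l ih =>
    simpa using (hf i (by simp)).inter (ih fun j hj => hf j (by simp [hj]))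

theorem IsSemilinear.compl (hs : IsSemilinear s) : IsSemilinear sᶜ := by
  obtain ⟨φ, rfl⟩ := hs
  simp only [Set.compl_iUnion, Set.compl_iInter]
  refine .biInter φ fun C _ => .biUnion C fun A _ => ?_
  simpa [Set.compl_ofPred, ← LinAtom.holds_neg] using isSemilinear_setOf_holds A.neg

theorem IsSemilinear.preimage_comp (hs : IsSemilinear s) (e : Fin n → Fin m) :
    IsSemilinear ((· ∘ e) ⁻¹' s) := by
  obtain ⟨φ, rfl⟩ := hs
  simp only [Set.preimage_iUnion, Set.preimage_iInter]
  refine .biUnion φ fun C _ => .biInter C fun A _ => ?_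
  simpa [← LinAtom.holds_comap] using isSemilinear_setOf_holds (A.comap e)

end IsSemilinear

namespace LinAtom

variable {n : ℕ}

theorem holds_snoc_iff_of_coeff_last_eq_zero {A : LinAtom (n + 1)}
    (h : A.coeff (Fin.last n) = 0) (v : Fin n → ℝ) (x : ℝ) :
    A.Holds (Fin.snoc v x) ↔ A.init.Holds v := by
  rw [holds_snoc_iff, h, Rat.cast_zero, zero_mul, add_zero]
  rfl

theorem exists_snoc_holds_and_holds_iff {A B : LinAtom (n + 1)}
    (ha : A.coeff (Fin.last n) ≠ 0) (hb : B.coeff (Fin.last n) ≠ 0) (v : Fin n → ℝ) :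
    (∃ x, A.Holds (Fin.snoc v x) ∧ B.Holds (Fin.snoc v x)) ↔
      (A.coeff (Fin.last n) * B.coeff (Fin.last n) < 0 →
        (combine |B.coeff (Fin.last n)| |A.coeff (Fin.last n)| A.init B.init).Holds v) := by
  have key := exists_posCond_and_posCond_iff (Rat.cast_ne_zero.2 ha) (Rat.cast_ne_zero.2 hb)
    A.strict B.strict (A.init.eval v) (B.init.eval v)
  simp_rw [holds_snoc_iff]
  rw [Holds, eval_combine]
  exact_mod_cast key

theorem exists_forall_holds_snoc_iff (C : List (LinAtom (n + 1))) (v : Fin n → ℝ) :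
    (∃ x, ∀ A ∈ C, A.Holds (Fin.snoc v x)) ↔
      ∀ A ∈ C, ∀ B ∈ C, ∃ x, A.Holds (Fin.snoc v x) ∧ B.Holds (Fin.snoc v x) := by
  classical
  refine ⟨fun ⟨x, hx⟩ A hA B hB => ⟨x, hx A hA, hx B hB⟩, fun h => ?_⟩
  have hconvex : ∀ A ∈ C.toFinset, Convex ℝ {x | A.Holds (Fin.snoc v x)} := fun A _ => by
    simpa only [holds_snoc_iff] using convex_setOf_posCond _ _ _
  obtain ⟨x, hx⟩ := Convex.helly_theorem' hconvex fun J hJ hcard => by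
    rw [Module.finrank_self] at hcard
    interval_cases hJ' : J.card
    · simp [Finset.card_eq_zero.1 hJ']
    · obtain ⟨A, rfl⟩ := Finset.card_eq_one.1 hJ'
      have hA : A ∈ C := by simpa using hJ
      simpa [Set.Nonempty] using (h A hA A hA).imp fun _ => And.left
    · obtain ⟨A, B, -, rfl⟩ := Finset.card_eq_two.1 hJ'
      obtain ⟨hA, hB⟩ : A ∈ C ∧ B ∈ C := by simpa [Finset.insert_subset_iff] using hJ
      simpa [Set.Nonempty] using h A hA B hB
  exact ⟨x, by simpa using hx⟩

end LinAtom

section FourierMotzkin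

open LinAtom

variable {n : ℕ}

theorem isSemilinear_exists_snoc_holds_and_holds_of_ne_zero {A B : LinAtom (n + 1)}
    (ha : A.coeff (Fin.last n) ≠ 0) (hb : B.coeff (Fin.last n) ≠ 0) :
    IsSemilinear {v | ∃ x, A.Holds (Fin.snoc v x) ∧ B.Holds (Fin.snoc v x)} := by
  simp_rw [exists_snoc_holds_and_holds_iff ha hb]
  by_cases hab : A.coeff (Fin.last n) * B.coeff (Fin.last n) < 0
  · simpa [hab] using isSemilinear_setOf_holds _
  · simpa [hab] using isSemilinear_univ

theorem isSemilinear_exists_snoc_holds (A : LinAtom (n + 1)) :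
    IsSemilinear {v | ∃ x, A.Holds (Fin.snoc v x)} := by
  by_cases ha : A.coeff (Fin.last n) = 0
  · simpa [holds_snoc_iff_of_coeff_last_eq_zero ha] using isSemilinear_setOf_holds A.init
  · simpa using isSemilinear_exists_snoc_holds_and_holds_of_ne_zero ha ha

theorem isSemilinear_exists_snoc_holds_and_holds (A B : LinAtom (n + 1)) :
    IsSemilinear {v | ∃ x, A.Holds (Fin.snoc v x) ∧ B.Holds (Fin.snoc v x)} := by
  by_cases ha : A.coeff (Fin.last n) = 0
  · simpa [holds_snoc_iff_of_coeff_last_eq_zero ha, Set.ofPred_and] using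
      (isSemilinear_setOf_holds A.init).inter (isSemilinear_exists_snoc_holds B)
  by_cases hb : B.coeff (Fin.last n) = 0
  · simpa [holds_snoc_iff_of_coeff_last_eq_zero hb, Set.ofPred_and] using
      (isSemilinear_exists_snoc_holds A).inter (isSemilinear_setOf_holds B.init)
  exact isSemilinear_exists_snoc_holds_and_holds_of_ne_zero ha hb

theorem IsSemilinear.exists_snoc {s : Set (Fin (n + 1) → ℝ)} (hs : IsSemilinear s) :
    IsSemilinear {v | ∃ x, Fin.snoc v x ∈ s} := by
  obtain ⟨φ, rfl⟩ := hs
  have : {v | ∃ x, Fin.snoc v x ∈ ⋃ C ∈ φ, ⋂ A ∈ C, {v | A.Holds v}} =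
      ⋃ C ∈ φ, ⋂ A ∈ C, ⋂ B ∈ C, {v | ∃ x, A.Holds (Fin.snoc v x) ∧ B.Holds (Fin.snoc v x)} := by
    ext v
    simp only [Set.mem_iUnion, Set.mem_iInter, Set.mem_ofPred_eq, exists_prop,
      ← exists_forall_holds_snoc_iff]
    exact ⟨fun ⟨x, C, hC, h⟩ => ⟨C, hC, x, h⟩, fun ⟨C, hC, x, h⟩ => ⟨x, C, hC, h⟩⟩
  rw [this]
  exact .biUnion φ fun C _ => .biInter C fun A _ => .biInter C fun B _ =>
    isSemilinear_exists_snoc_holds_and_holds A B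

end FourierMotzkin

/-- If all constraints of a satisfied conjunction were slack at `y`, the fibre would contain a
neighbourhood of `y`; so one of them is tight, and it determines `y` rationally. -/
theorem IsSemilinear.exists_rat_of_fiber_eq_singleton {n : ℕ} {s : Set (Fin (n + 1) → ℝ)}
    (hs : IsSemilinear s) (r : Fin n → ℚ) {y : ℝ}
    (hy : {x | Fin.snoc (fun i => (r i : ℝ)) x ∈ s} = {y}) : ∃ q : ℚ, y = q := by
  obtain ⟨φ, rfl⟩ := hs
  set v : Fin n → ℝ := fun i => r i with hv
  obtain ⟨C, hC, hyC⟩ : ∃ C ∈ φ, ∀ A ∈ C, A.Holds (Fin.snoc v y) := by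
    simpa using hy.ge rfl
  by_contra! hirr
  have hnhds : ∀ A ∈ C, ∀ᶠ x in 𝓝 y, A.Holds (Fin.snoc v x) := by
    intro A hA
    have hAy := hyC A hA
    by_cases ha : A.coeff (Fin.last n) = 0
    · simp only [LinAtom.holds_snoc_iff_of_coeff_last_eq_zero ha] at hAy ⊢
      exact .of_forall fun _ => hAy
    rw [LinAtom.holds_snoc_iff] at hAy
    have hpos : 0 < A.init.eval v + A.coeff (Fin.last n) * y := by
      refine hAy.nonneg.lt_of_ne fun h0 => hirr
        (-(∑ i, A.init.coeff i * r i + A.init.const) / A.coeff (Fin.last n)) ?_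
      rw [hv, LinAtom.eval_ratCast] at h0
      rw [Rat.cast_div, Rat.cast_neg, eq_div_iff (Rat.cast_ne_zero.2 ha)]
      linarith
    have hcont : Continuous fun x => A.init.eval v + A.coeff (Fin.last n) * x := by fun_prop
    filter_upwards [hcont.continuousAt.eventually (lt_mem_nhds hpos)] with x hx
    exact (LinAtom.holds_snoc_iff A v x).2 (.of_pos _ hx)
  have hfiber : {x | Fin.snoc v x ∈ ⋃ C ∈ φ, ⋂ A ∈ C, {v | A.Holds v}} ∈ 𝓝 y := by
    filter_upwards [(eventually_all_finite (List.finite_toSet C)).2 hnhds] with x hx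
    simp only [Set.mem_ofPred_eq, Set.mem_iUnion, Set.mem_iInter]
    exact ⟨C, hC, hx⟩
  rw [hy] at hfiber
  exact not_isOpen_singleton y (isOpen_iff_mem_nhds.2 fun x hx => hx ▸ hfiber)

def IsRatAffine {n : ℕ} (f : (Fin n → ℝ) → ℝ) : Prop :=
  ∃ (a : Fin n → ℚ) (c : ℚ), ∀ v, f v = ∑ i, (a i : ℝ) * v i + c

namespace IsRatAffine

variable {n : ℕ} {f g : (Fin n → ℝ) → ℝ}

theorem const (q : ℚ) : IsRatAffine fun _ : Fin n → ℝ => (q : ℝ) := ⟨0, q, by simp⟩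

theorem zero : IsRatAffine fun _ : Fin n → ℝ => (0 : ℝ) := by simpa using const (n := n) 0

theorem one : IsRatAffine fun _ : Fin n → ℝ => (1 : ℝ) := by simpa using const (n := n) 1

theorem apply (i : Fin n) : IsRatAffine fun v => v i :=
  ⟨Pi.single i 1, 0, fun v => by simp [Pi.single_apply, apply_ite (Rat.cast : ℚ → ℝ)]⟩

theorem add (hf : IsRatAffine f) (hg : IsRatAffine g) : IsRatAffine fun v => f v + g v := by
  obtain ⟨a, c, hf⟩ := hf
  obtain ⟨b, d, hg⟩ := hg
  refine ⟨a + b, c + d, fun v => ?_⟩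
  simp only [hf, hg, Pi.add_apply, Rat.cast_add, add_mul, Finset.sum_add_distrib]
  ring

theorem sub (hf : IsRatAffine f) (hg : IsRatAffine g) : IsRatAffine fun v => f v - g v := by
  obtain ⟨a, c, hf⟩ := hf
  obtain ⟨b, d, hg⟩ := hg
  refine ⟨a - b, c - d, fun v => ?_⟩
  simp only [hf, hg, Pi.sub_apply, Rat.cast_sub, sub_mul, Finset.sum_sub_distrib]
  ring

theorem const_mul (q : ℚ) (hf : IsRatAffine f) : IsRatAffine fun v => q * f v := by
  obtain ⟨a, c, hf⟩ := hf
  exact ⟨q • a, q * c, fun v => by simp [hf, mul_add, Finset.mul_sum, mul_assoc]⟩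

theorem comp_init (hf : IsRatAffine f) :
    IsRatAffine fun u : Fin (n + 1) → ℝ => f (Fin.init u) := by
  obtain ⟨a, c, hf⟩ := hf
  exact ⟨Fin.snoc a 0, c, fun u => by simp [hf, Fin.sum_univ_castSucc, Fin.init]⟩

theorem isSemilinear_setOf_nonneg (hf : IsRatAffine f) : IsSemilinear {v | 0 ≤ f v} := by
  obtain ⟨a, c, hf⟩ := hf
  simpa [LinAtom.Holds, LinAtom.eval, PosCond, hf] using isSemilinear_setOf_holds ⟨a, c, false⟩

theorem isSemilinear_setOf_pos (hf : IsRatAffine f) : IsSemilinear {v | 0 < f v} := by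
  obtain ⟨a, c, hf⟩ := hf
  simpa [LinAtom.Holds, LinAtom.eval, PosCond, hf] using isSemilinear_setOf_holds ⟨a, c, true⟩

theorem isSemilinear_setOf_le (hf : IsRatAffine f) (hg : IsRatAffine g) :
    IsSemilinear {v | f v ≤ g v} := by
  simpa using (hg.sub hf).isSemilinear_setOf_nonneg

theorem isSemilinear_setOf_lt (hf : IsRatAffine f) (hg : IsRatAffine g) :
    IsSemilinear {v | f v < g v} := by
  simpa using (hg.sub hf).isSemilinear_setOf_pos

theorem isSemilinear_setOf_eq (hf : IsRatAffine f) (hg : IsRatAffine g) :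
    IsSemilinear {v | f v = g v} := by
  simpa [le_antisymm_iff, Set.ofPred_and] using
    (hf.isSemilinear_setOf_le hg).inter (hg.isSemilinear_setOf_le hf)

end IsRatAffine

def IsSemilinearFun {n : ℕ} (f : (Fin n → ℝ) → ℝ) : Prop :=
  IsSemilinear {u : Fin (n + 1) → ℝ | u (Fin.last n) = f (Fin.init u)}

theorem IsRatAffine.isSemilinearFun {n : ℕ} {f : (Fin n → ℝ) → ℝ} (hf : IsRatAffine f) :
    IsSemilinearFun f :=
  (IsRatAffine.apply (Fin.last n)).isSemilinear_setOf_eq hf.comp_init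

theorem isSemilinearFun_max : IsSemilinearFun fun w : Fin 2 → ℝ => max (w 0) (w 1) := by
  have h₀ := (IsRatAffine.apply (2 : Fin 3)).isSemilinear_setOf_eq (IsRatAffine.apply 0)
  have h₁ := (IsRatAffine.apply (2 : Fin 3)).isSemilinear_setOf_eq (IsRatAffine.apply 1)
  have h₀₁ := (IsRatAffine.apply (0 : Fin 3)).isSemilinear_setOf_le (IsRatAffine.apply 1)
  have h₁₀ := (IsRatAffine.apply (1 : Fin 3)).isSemilinear_setOf_le (IsRatAffine.apply 0)
  unfold IsSemilinearFun
  convert (h₀.inter h₁₀).union (h₁.inter h₀₁) using 1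
  ext u
  simp [Fin.init, eq_comm (a := u 2), max_eq_iff]

theorem isSemilinearFun_min : IsSemilinearFun fun w : Fin 2 → ℝ => min (w 0) (w 1) := by
  have h₀ := (IsRatAffine.apply (2 : Fin 3)).isSemilinear_setOf_eq (IsRatAffine.apply 0)
  have h₁ := (IsRatAffine.apply (2 : Fin 3)).isSemilinear_setOf_eq (IsRatAffine.apply 1)
  have h₀₁ := (IsRatAffine.apply (0 : Fin 3)).isSemilinear_setOf_le (IsRatAffine.apply 1)
  have h₁₀ := (IsRatAffine.apply (1 : Fin 3)).isSemilinear_setOf_le (IsRatAffine.apply 0)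
  unfold IsSemilinearFun
  convert (h₀.inter h₀₁).union (h₁.inter h₁₀) using 1
  ext u
  simp [Fin.init, eq_comm (a := u 2), min_eq_iff]

theorem snoc_snoc_comp_succAbove {α : Type*} {n : ℕ} (v : Fin n → α) (y x : α) :
    Fin.snoc (Fin.snoc v y) x ∘ (Fin.last n).castSucc.succAbove =
      (Fin.snoc v x : Fin (n + 1) → α) := by
  funext i
  induction i using Fin.lastCases with
  | last => simp
  | cast i => simp [Fin.succAbove_of_castSucc_lt]

namespace IsSemilinearFun

variable {n : ℕ}

section

variable {f g : (Fin n → ℝ) → ℝ}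

theorem subst (hf : IsSemilinearFun f) {s : Set (Fin (n + 1) → ℝ)} (hs : IsSemilinear s) :
    IsSemilinear {v | Fin.snoc v (f v) ∈ s} := by
  convert (hf.inter hs).exists_snoc using 1
  ext v
  simp

theorem comp_init (hf : IsSemilinearFun f) :
    IsSemilinearFun fun u : Fin (n + 1) → ℝ => f (Fin.init u) := by
  unfold IsSemilinearFun
  convert hf.preimage_comp (Fin.last n).castSucc.succAbove using 1
  ext u
  induction u using Fin.snocCases with
  | _ w x => induction w using Fin.snocCases with
    | _ v y => simp [snoc_snoc_comp_succAbove]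

theorem comp₂ {h : ℝ → ℝ → ℝ} (hh : IsSemilinearFun fun w : Fin 2 → ℝ => h (w 0) (w 1))
    (hf : IsSemilinearFun f) (hg : IsSemilinearFun g) :
    IsSemilinearFun fun v => h (f v) (g v) := by
  -- in coordinates `(v, y, a, b)`, the graph of `h` placed as `h a b = y`
  have hT := hh.preimage_comp
    ![(Fin.last (n + 1)).castSucc, Fin.last (n + 2), (Fin.last n).castSucc.castSucc]
  unfold IsSemilinearFun
  convert hf.comp_init.subst (hg.comp_init.comp_init.subst hT) using 1
  ext u
  simp [Fin.init]

theorem isSemilinear_setOf_le (hf : IsSemilinearFun f) (hg : IsSemilinearFun g) :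
    IsSemilinear {v | f v ≤ g v} := by
  have hT := (IsRatAffine.apply (Fin.last n).castSucc).isSemilinear_setOf_le
    (IsRatAffine.apply (Fin.last (n + 1)))
  simpa using hf.subst (hg.comp_init.subst hT)

theorem of_isLeast {S : Set (Fin (n + 1) → ℝ)} (hS : IsSemilinear S)
    (hg : ∀ v, IsLeast {y | Fin.snoc v y ∈ S} (g v)) : IsSemilinearFun g := by
  -- the points `(v, y, z)` with `(v, z) ∈ S` and `z < y`
  have hT := (hS.preimage_comp (Fin.last n).castSucc.succAbove).inter
    ((IsRatAffine.apply (Fin.last (n + 1))).isSemilinear_setOf_lt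
      (IsRatAffine.apply (Fin.last n).castSucc))
  unfold IsSemilinearFun
  convert hS.inter hT.exists_snoc.compl using 1
  ext u
  induction u using Fin.snocCases with
  | _ v y =>
    simp only [Set.mem_ofPred_eq, Fin.snoc_last, Fin.init_snoc, Set.mem_inter_iff,
      Set.mem_compl_iff, Set.mem_preimage, snoc_snoc_comp_succAbove, Fin.snoc_castSucc,
      not_exists, not_and, not_lt]
    constructor
    · rintro rfl
      exact ⟨(hg v).1, fun z hz => (hg v).2 hz⟩
    · rintro ⟨hy, hmin⟩
      exact le_antisymm (hmin _ (hg v).1) ((hg v).2 hy)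

theorem of_isGreatest {S : Set (Fin (n + 1) → ℝ)} (hS : IsSemilinear S)
    (hg : ∀ v, IsGreatest {y | Fin.snoc v y ∈ S} (g v)) : IsSemilinearFun g := by
  have hT := (hS.preimage_comp (Fin.last n).castSucc.succAbove).inter
    ((IsRatAffine.apply (Fin.last n).castSucc).isSemilinear_setOf_lt
      (IsRatAffine.apply (Fin.last (n + 1))))
  unfold IsSemilinearFun
  convert hS.inter hT.exists_snoc.compl using 1
  ext u
  induction u using Fin.snocCases with
  | _ v y =>
    simp only [Set.mem_ofPred_eq, Fin.snoc_last, Fin.init_snoc, Set.mem_inter_iff,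
      Set.mem_compl_iff, Set.mem_preimage, snoc_snoc_comp_succAbove, Fin.snoc_castSucc,
      not_exists, not_and, not_lt]
    constructor
    · rintro rfl
      exact ⟨(hg v).1, fun z hz => (hg v).2 hz⟩
    · rintro ⟨hy, hmax⟩
      exact le_antisymm ((hg v).2 hy) (hmax _ (hg v).1)

theorem exists_rat_eq (hf : IsSemilinearFun f) (r : Fin n → ℚ) :
    ∃ q : ℚ, f (fun i => r i) = q :=
  hf.exists_rat_of_fiber_eq_singleton r (by ext y; simp)

end

section

variable {f : (Fin (n + 1) → ℝ) → ℝ} {g : (Fin n → ℝ) → ℝ}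

theorem of_isLeast_unitInterval (hf : IsSemilinearFun f)
    (hg : ∀ v, IsLeast {y | 0 ≤ y ∧ y ≤ 1 ∧ f (Fin.snoc v y) ≤ y} (g v)) :
    IsSemilinearFun g := by
  have hlast := IsRatAffine.apply (Fin.last n)
  have hS : IsSemilinear {u | 0 ≤ u (Fin.last n) ∧ u (Fin.last n) ≤ 1 ∧ f u ≤ u (Fin.last n)} := by
    simpa [Set.ofPred_and] using (IsRatAffine.zero.isSemilinear_setOf_le hlast).inter
      ((hlast.isSemilinear_setOf_le IsRatAffine.one).inter
        (hf.isSemilinear_setOf_le hlast.isSemilinearFun))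
  exact of_isLeast hS (by simpa using hg)

theorem of_isGreatest_unitInterval (hf : IsSemilinearFun f)
    (hg : ∀ v, IsGreatest {y | 0 ≤ y ∧ y ≤ 1 ∧ y ≤ f (Fin.snoc v y)} (g v)) :
    IsSemilinearFun g := by
  have hlast := IsRatAffine.apply (Fin.last n)
  have hS : IsSemilinear {u | 0 ≤ u (Fin.last n) ∧ u (Fin.last n) ≤ 1 ∧ u (Fin.last n) ≤ f u} := by
    simpa [Set.ofPred_and] using (IsRatAffine.zero.isSemilinear_setOf_le hlast).inter
      ((hlast.isSemilinear_setOf_le IsRatAffine.one).inter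
        (hlast.isSemilinearFun.isSemilinear_setOf_le hf))
  exact of_isGreatest hS (by simpa using hg)

end

end IsSemilinearFun

theorem Fin.snoc_mono {α : Type*} [Preorder α] {n : ℕ} {ρ ρ' : Fin n → α} {x x' : α}
    (h : ρ ≤ ρ') (hx : x ≤ x') : (Fin.snoc ρ x : Fin (n + 1) → α) ≤ Fin.snoc ρ' x' := by
  intro i
  induction i using Fin.lastCases with
  | last => simpa using hx
  | cast i => simpa using h i

namespace LTerm

theorem eval_mono : ∀ {n} (t : LTerm n), Monotone t.eval
  | _, .var i, _, _, h => h i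
  | _, .scal q t, _, _, h => show (q.1 : ℝ) * t.eval _ ≤ (q.1 : ℝ) * t.eval _ from
    mul_le_mul_of_nonneg_left (Subtype.coe_le_coe.2 (t.eval_mono h)) (Rat.cast_nonneg.2 q.2.1)
  | _, .join t₁ t₂, _, _, h => max_le_max (t₁.eval_mono h) (t₂.eval_mono h)
  | _, .meet t₁ t₂, _, _, h => min_le_min (t₁.eval_mono h) (t₂.eval_mono h)
  | _, .oplus t₁ t₂, _, _, h =>
    min_le_min_left _ (add_le_add (Subtype.coe_le_coe.2 (t₁.eval_mono h))
      (Subtype.coe_le_coe.2 (t₂.eval_mono h)))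
  | _, .odot t₁ t₂, _, _, h =>
    max_le_max_left _ (sub_le_sub_right (add_le_add (Subtype.coe_le_coe.2 (t₁.eval_mono h))
      (Subtype.coe_le_coe.2 (t₂.eval_mono h))) 1)
  | _, .mu t, _, _, h => sInf_le_sInf fun _ hx => (t.eval_mono (Fin.snoc_mono h le_rfl)).trans hx
  | _, .nu t, _, _, h => sSup_le_sSup fun _ hx => hx.trans (t.eval_mono (Fin.snoc_mono h le_rfl))

variable {n : ℕ}

/-- Clamping the arguments to `[0,1]` makes the value of a term a function on all of `ℝⁿ`. -/
def evalReal (t : LTerm n) (v : Fin n → ℝ) : ℝ :=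
  t.eval fun i => Set.projIcc 0 1 zero_le_one (v i)

theorem evalReal_snoc (t : LTerm (n + 1)) (v : Fin n → ℝ) (y : ℝ) :
    t.evalReal (Fin.snoc v y) =
      t.eval (Fin.snoc (fun i => Set.projIcc 0 1 zero_le_one (v i))
        (Set.projIcc 0 1 zero_le_one y)) := by
  show (t.eval (Set.projIcc 0 1 zero_le_one ∘ Fin.snoc v y) : ℝ) = _
  rw [Fin.comp_snoc]
  rfl

theorem isLeast_evalReal_mu (t : LTerm (n + 1)) (v : Fin n → ℝ) :
    IsLeast {y | 0 ≤ y ∧ y ≤ 1 ∧ t.evalReal (Fin.snoc v y) ≤ y} ((mu t).evalReal v) := by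
  let f : I →o I := ⟨fun x => t.eval (Fin.snoc (fun i => Set.projIcc 0 1 zero_le_one (v i)) x),
    fun _ _ hx => t.eval_mono (Fin.snoc_mono le_rfl hx)⟩
  change IsLeast _ (f.lfp : ℝ)
  obtain ⟨hlfp, hle⟩ := f.isLeast_lfp_le
  refine ⟨⟨f.lfp.2.1, f.lfp.2.2, ?_⟩, fun y ⟨h0, h1, hy⟩ => ?_⟩
  · rw [evalReal_snoc, Set.projIcc_val]
    exact hlfp
  · rw [evalReal_snoc, Set.projIcc_of_mem zero_le_one ⟨h0, h1⟩] at hy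
    exact hle (show f ⟨y, h0, h1⟩ ≤ ⟨y, h0, h1⟩ from hy)

theorem isGreatest_evalReal_nu (t : LTerm (n + 1)) (v : Fin n → ℝ) :
    IsGreatest {y | 0 ≤ y ∧ y ≤ 1 ∧ y ≤ t.evalReal (Fin.snoc v y)} ((nu t).evalReal v) := by
  let f : I →o I := ⟨fun x => t.eval (Fin.snoc (fun i => Set.projIcc 0 1 zero_le_one (v i)) x),
    fun _ _ hx => t.eval_mono (Fin.snoc_mono le_rfl hx)⟩
  change IsGreatest _ (f.gfp : ℝ)
  obtain ⟨hgfp, hge⟩ := f.isGreatest_gfp_le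
  refine ⟨⟨f.gfp.2.1, f.gfp.2.2, ?_⟩, fun y ⟨h0, h1, hy⟩ => ?_⟩
  · rw [evalReal_snoc, Set.projIcc_val]
    exact hgfp
  · rw [evalReal_snoc, Set.projIcc_of_mem zero_le_one ⟨h0, h1⟩] at hy
    exact hge (show (⟨y, h0, h1⟩ : I) ≤ f ⟨y, h0, h1⟩ from hy)

theorem evalReal_join (t₁ t₂ : LTerm n) :
    (join t₁ t₂).evalReal = fun v => max (t₁.evalReal v) (t₂.evalReal v) :=
  funext fun _ => Set.Icc.coe_sup

theorem evalReal_meet (t₁ t₂ : LTerm n) :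
    (meet t₁ t₂).evalReal = fun v => min (t₁.evalReal v) (t₂.evalReal v) :=
  funext fun _ => Set.Icc.coe_inf

theorem isSemilinearFun_evalReal : ∀ {n} (t : LTerm n), IsSemilinearFun t.evalReal
  | _, .var i => isSemilinearFun_max.comp₂ IsRatAffine.zero.isSemilinearFun
      (isSemilinearFun_min.comp₂ IsRatAffine.one.isSemilinearFun
        (IsRatAffine.apply i).isSemilinearFun)
  | _, .scal q t => (IsRatAffine.const_mul q.1 (IsRatAffine.apply 0)).isSemilinearFun.comp₂
      (h := fun a _ => q.1 * a) (isSemilinearFun_evalReal t) (isSemilinearFun_evalReal t)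
  | _, .join t₁ t₂ => evalReal_join t₁ t₂ ▸
      isSemilinearFun_max.comp₂ (isSemilinearFun_evalReal t₁) (isSemilinearFun_evalReal t₂)
  | _, .meet t₁ t₂ => evalReal_meet t₁ t₂ ▸
      isSemilinearFun_min.comp₂ (isSemilinearFun_evalReal t₁) (isSemilinearFun_evalReal t₂)
  | _, .oplus t₁ t₂ => isSemilinearFun_min.comp₂ IsRatAffine.one.isSemilinearFun
      (((IsRatAffine.apply 0).add (IsRatAffine.apply 1)).isSemilinearFun.comp₂ (h := (· + ·))
        (isSemilinearFun_evalReal t₁) (isSemilinearFun_evalReal t₂))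
  | _, .odot t₁ t₂ => isSemilinearFun_max.comp₂ IsRatAffine.zero.isSemilinearFun
      ((((IsRatAffine.apply 0).add (IsRatAffine.apply 1)).sub IsRatAffine.one).isSemilinearFun.comp₂
        (h := fun a b => a + b - 1) (isSemilinearFun_evalReal t₁) (isSemilinearFun_evalReal t₂))
  | _, .mu t => (isSemilinearFun_evalReal t).of_isLeast_unitInterval (isLeast_evalReal_mu t)
  | _, .nu t => (isSemilinearFun_evalReal t).of_isGreatest_unitInterval (isGreatest_evalReal_nu t)

end LTerm

/-- For every Łukasiewicz μ-term `t(x₁, …, xₙ)` and every vector of rationals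
in `[0,1]`, the value `t(q₁, …, qₙ)` is a rational number. -/
theorem stmt11 {n : ℕ} (t : LTerm n) (ρ : Fin n → I)
    (hρ : ∀ i, ∃ q : ℚ, ((ρ i : I) : ℝ) = (q : ℝ)) :
    ∃ q : ℚ, ((t.eval ρ : I) : ℝ) = (q : ℝ) := by
  choose r hr using hρ
  have hρr : ρ = fun i => Set.projIcc 0 1 zero_le_one (r i : ℝ) :=
    funext fun i => by rw [← hr i, Set.projIcc_val]
  rw [hρr]
  exact (LTerm.isSemilinearFun_evalReal t).exists_rat_eq r

end
end

section
/- Let g : [0,1] → [0,1] be monotone, let p ∈ [0,1) and q ∈ ℝ, and set r = q/(1 − p). Suppose r ∈ [0,1], and suppose d ∈ [0,1] satisfies d ≤ r, d is less than or equal to the least fixed point of g, and g(x) = p·x + q for every x ∈ [d, r]. Then the least fixed point of g equals r. (This is the key correctness step for the direct fixed-point evaluation algorithm for Łukasiewicz μ-terms: r is the unique solution of x = p·x + q, and since g agrees with this affine map on the convex region between the current approximation d and r, r is the least fixed point.) -/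
/-! Since `r` is a fixed point of `g`, the least fixed point lies in `[d, r]`, where `g` is the
affine map `x ↦ p x + q`; for `p ≠ 1` that map has `r` as its only fixed point. -/

open unitInterval

theorem OrderHom.lfp_eq_of_forall_fixed_Icc {α : Type*} [CompleteLattice α] (f : α →o α)
    {a d : α} (hd : d ≤ lfp f) (ha : f a = a)
    (huniq : ∀ x, d ≤ x → x ≤ a → f x = x → x = a) : lfp f = a :=
  huniq _ hd (lfp_le_fixed f ha) (map_lfp f)

theorem mul_add_eq_self_iff_eq_div {p q x : ℝ} (hp : p ≠ 1) : p * x + q = x ↔ x = q / (1 - p) := by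
  have hp' : 1 - p ≠ 0 := sub_ne_zero.mpr hp.symm
  rw [eq_div_iff hp']
  constructor <;> intro h <;> linarith

/-- Key correctness step for the direct fixed-point evaluation algorithm: if
`g : [0,1] → [0,1]` is monotone, `p ∈ [0,1)`, `r = q/(1 - p) ∈ [0,1]`, and
`d ∈ [0,1]` satisfies `d ≤ r`, `d ≤ lfp g`, and `g x = p·x + q` on `[d, r]`,
then `lfp g = r`. -/
theorem stmt15 (g : I →o I) (p q : ℝ) (hp : p ∈ Set.Ico (0:ℝ) 1)
    (r : ℝ) (hr_def : r = q / (1 - p)) (hr : r ∈ Set.Icc (0:ℝ) 1)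
    (d : I) (hd1 : (d : ℝ) ≤ r) (hd2 : d ≤ OrderHom.lfp g)
    (hg : ∀ x : I, (d : ℝ) ≤ (x : ℝ) → (x : ℝ) ≤ r → ((g x : I) : ℝ) = p * (x : ℝ) + q) :
    ((OrderHom.lfp g : I) : ℝ) = r := by
  have hp1 : p ≠ 1 := hp.2.ne
  let rI : I := ⟨r, hr⟩
  have hfix : g rI = rI :=
    Subtype.ext <| (hg rI hd1 le_rfl).trans <| (mul_add_eq_self_iff_eq_div hp1).mpr hr_def
  have huniq : ∀ x, d ≤ x → x ≤ rI → g x = x → x = rI := by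
    intro x hdx hxr hgx
    have hx : p * (x : ℝ) + q = x := (hg x hdx hxr).symm.trans (congrArg Subtype.val hgx)
    exact Subtype.ext <| ((mul_add_eq_self_iff_eq_div hp1).mp hx).trans hr_def.symm
  exact congrArg Subtype.val (g.lfp_eq_of_forall_fixed_Icc hd2 hfix huniq)
end
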